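/- Let f : ℝ → ℝ be a continuous monotone (order preserving) map and let μ be a Borel probability measure on ℝ that is invariant and ergodic for f. Then μ is a Dirac measure: there exists m ∈ ℝ such that μ = δ_m. -/

import Mathlib

/-!
By Poincaré recurrence, almost every point returns to each of its neighbourhoods infinitely
often. The orbit of a point under a monotone map of a line is monotone, so a point with
`x < f x` never comes back below `f x`, and symmetrically for `f x < x`: almost every point is
fixed. Then `f` agrees a.e. with the identity, so ergodicity makes the identity a.e. constant.
-/

open MeasureTheory Filter Topology Function

theorem Monotone.isFixedPt_of_frequently_mem_nhds {α : Type*} [LinearOrder α]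
    [TopologicalSpace α] [OrderClosedTopology α] {f : α → α} (hf : Monotone f) {x : α}
    (hx : ∀ s ∈ 𝓝 x, ∃ᶠ n in atTop, f^[n] x ∈ s) : IsFixedPt f x := by
  rcases lt_trichotomy (f x) x with hlt | heq | hgt
  · obtain ⟨n, hmem, hn⟩ :=
      ((hx _ (Ioi_mem_nhds hlt)).and_eventually (eventually_ge_atTop 1)).exists
    exact absurd (hf.antitone_iterate_of_map_le hlt.le hn) (not_le.2 hmem)
  · exact heq
  · obtain ⟨n, hmem, hn⟩ :=
      ((hx _ (Iio_mem_nhds hgt)).and_eventually (eventually_ge_atTop 1)).exists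
    exact absurd (hf.monotone_iterate_of_le_map hgt.le hn) (not_le.2 hmem)

variable {α : Type*} [MeasurableSpace α] {f : α → α} {μ : Measure α}

theorem Monotone.ae_isFixedPt_of_conservative [LinearOrder α] [TopologicalSpace α]
    [OrderClosedTopology α] [SecondCountableTopology α] [OpensMeasurableSpace α]
    (hf : Monotone f) (hμ : Conservative f μ) : ∀ᵐ x ∂μ, IsFixedPt f x :=
  hμ.ae_frequently_mem_of_mem_nhds.mono fun _ => hf.isFixedPt_of_frequently_mem_nhds

theorem QuasiErgodic.exists_ae_eq_of_ae_isFixedPt [Nonempty α]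
    [MeasurableSpace.CountablySeparated α] (hf : QuasiErgodic f μ)
    (hfix : ∀ᵐ x ∂μ, IsFixedPt f x) : ∃ c, ∀ᵐ x ∂μ, x = c :=
  hf.ae_eq_const_of_ae_eq_comp₀ (g := id) measurable_id.nullMeasurable hfix

theorem PreErgodic.of_prob_eq_zero_or_one [IsProbabilityMeasure μ]
    (h : ∀ s, MeasurableSet s → f ⁻¹' s = s → μ s = 0 ∨ μ s = 1) : PreErgodic f μ where
  aeconst_set s hs hfs := by
    refine eventuallyConst_set.2 ((h s hs hfs).symm.imp (fun h1 => ?_) fun h0 => ?_)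
    exacts [(mem_ae_iff_prob_eq_one hs).2 h1, measure_eq_zero_iff_ae_notMem.1 h0]

theorem MeasureTheory.Measure.eq_dirac_of_ae_eq [MeasurableSingletonClass α]
    [IsProbabilityMeasure μ] {c : α} (h : ∀ᵐ x ∂μ, x = c) : μ = Measure.dirac c := by
  have hc : μ {c} = 1 := (mem_ae_iff_prob_eq_one (measurableSet_singleton c)).1 h
  have hμ := (Measure.ae_mem_finset_iff (s := {c})).1 (by simpa using h)
  rwa [Finset.sum_singleton, hc, one_smul] at hμ

theorem stmt_9_general (f : ℝ → ℝ) (hm : Monotone f)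
    (μ : Measure ℝ) [IsProbabilityMeasure μ]
    (hinv : μ.map f = μ)
    (herg : ∀ A : Set ℝ, MeasurableSet A → f ⁻¹' A = A → μ A = 0 ∨ μ A = 1) :
    ∃ m : ℝ, μ = Measure.dirac m := by
  have hmp : MeasurePreserving f μ μ := ⟨hm.measurable, hinv⟩
  have hergodic : Ergodic f μ := ⟨hmp, .of_prob_eq_zero_or_one herg⟩
  obtain ⟨m, hμm⟩ := hergodic.quasiErgodic.exists_ae_eq_of_ae_isFixedPt
    (hm.ae_isFixedPt_of_conservative hmp.conservative)
  exact ⟨m, Measure.eq_dirac_of_ae_eq hμm⟩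

/-- A deterministic version of Proposition 2: an ergodic invariant Borel probability
measure of a continuous monotone map `f : ℝ → ℝ` is a Dirac measure. -/
theorem stmt_9 (f : ℝ → ℝ) (hc : Continuous f) (hm : Monotone f)
    (μ : Measure ℝ) [IsProbabilityMeasure μ]
    (hinv : μ.map f = μ)
    (herg : ∀ A : Set ℝ, MeasurableSet A → f ⁻¹' A = A → μ A = 0 ∨ μ A = 1) :
    ∃ m : ℝ, μ = Measure.dirac m :=
  stmt_9_general f hm μ hinv herg
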